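/- Define the binary entropy (base 2) h : ℝ → ℝ by h(t) := −t·logb 2 t − (1−t)·logb 2 (1−t) for t ∈ (0,1), with h(0) = h(1) = 0. Then for every p ∈ (0,1), the supremum over x ∈ [0,1] of the mutual information of the Z-channel with error probability p, namely sup_{x ∈ [0,1]} (h(x·(1−p)) − x·h(p)), equals logb 2 (1 + (1−p)·p^{p/(1−p)}). -/

import Mathlib

/-- The binary entropy function (base 2): `h(t) = −t log₂ t − (1−t) log₂ (1−t)`.
Since `Real.logb 2 0 = 0` in Mathlib, this formula also gives `h 0 = 0` and `h 1 = 0`. -/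
noncomputable def binEntropy (t : ℝ) : ℝ :=
  -t * Real.logb 2 t - (1 - t) * Real.logb 2 (1 - t)

private lemma mul_log_sub_le (a b : ℝ) (ha : 0 ≤ a) (hb : 0 < b) :
    a * (Real.log b - Real.log a) ≤ b - a := by
  rcases eq_or_lt_of_le ha with h | h
  · simp [← h, hb.le]
  · have hba : 0 < b / a := by positivity
    have h1 := Real.log_le_sub_one_of_pos hba
    rw [Real.log_div hb.ne' h.ne'] at h1
    calc a * (Real.log b - Real.log a) ≤ a * (b / a - 1) :=
          mul_le_mul_of_nonneg_left h1 ha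
      _ = b - a := by field_simp

private lemma gibbs (a b : ℝ) (ha0 : 0 ≤ a) (ha1 : a ≤ 1) (hb0 : 0 < b) (hb1 : b < 1) :
    binEntropy a ≤ -a * Real.logb 2 b - (1 - a) * Real.logb 2 (1 - b) := by
  have hl2 : (0:ℝ) < Real.log 2 := Real.log_pos one_lt_two
  have h1 := mul_log_sub_le a b ha0 hb0
  have h2 := mul_log_sub_le (1 - a) (1 - b) (by linarith) (by linarith)
  have key : -a * Real.log a - (1 - a) * Real.log (1 - a)
      ≤ -a * Real.log b - (1 - a) * Real.log (1 - b) := by nlinarith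
  unfold binEntropy
  simp only [Real.logb]
  calc -a * (Real.log a / Real.log 2) - (1 - a) * (Real.log (1 - a) / Real.log 2)
      = (-a * Real.log a - (1 - a) * Real.log (1 - a)) / Real.log 2 := by ring
    _ ≤ (-a * Real.log b - (1 - a) * Real.log (1 - b)) / Real.log 2 :=
        (div_le_div_iff_of_pos_right hl2).mpr key
    _ = -a * (Real.log b / Real.log 2) - (1 - a) * (Real.log (1 - b) / Real.log 2) := by ring

private lemma key_id (p : ℝ) (hp0 : 0 < p) (hp1 : p < 1) :
    (1 - p) * Real.logb 2 ((1 - p) * p ^ (p / (1 - p))) + binEntropy p = 0 := by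
  have hq : (0:ℝ) < 1 - p := by linarith
  have hs : (0:ℝ) < p ^ (p / (1 - p)) := Real.rpow_pos_of_pos hp0 _
  have hl2 : Real.log 2 ≠ 0 := (Real.log_pos one_lt_two).ne'
  unfold binEntropy
  simp only [Real.logb]
  rw [Real.log_mul hq.ne' hs.ne', Real.log_rpow hp0]
  field_simp
  ring

/-- For every `p ∈ (0,1)`, the Shannon capacity of the classical
Z-channel with error probability `p`, i.e. the supremum over input distributions
`x ∈ [0,1]` of the mutual information `h(x(1−p)) − x·h(p)`, equals
`log₂ (1 + (1−p) · p^{p/(1−p)})`. -/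
theorem Z_channel_capacity (p : ℝ) (hp0 : 0 < p) (hp1 : p < 1) :
    sSup {y : ℝ | ∃ x ∈ Set.Icc (0 : ℝ) 1, y = binEntropy (x * (1 - p)) - x * binEntropy p}
      = Real.logb 2 (1 + (1 - p) * Real.rpow p (p / (1 - p))) := by
  have hq : (0:ℝ) < 1 - p := by linarith
  set s : ℝ := p ^ (p / (1 - p)) with hs_def
  have hs : 0 < s := Real.rpow_pos_of_pos hp0 _
  have hs1 : s ≤ 1 :=
    Real.rpow_le_one hp0.le hp1.le (div_nonneg hp0.le hq.le)
  set c : ℝ := (1 - p) * s with hc_def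
  have hc : 0 < c := by positivity
  have h1c : (0:ℝ) < 1 + c := by linarith
  have hb0 : 0 < c / (1 + c) := by positivity
  have hb1 : c / (1 + c) < 1 := (div_lt_one h1c).mpr (by linarith)
  have h1m : (1:ℝ) - c / (1 + c) = 1 / (1 + c) := by field_simp; ring
  have hAB : Real.logb 2 (c / (1 + c)) = Real.logb 2 c - Real.logb 2 (1 + c) :=
    Real.logb_div hc.ne' h1c.ne'
  have hB' : Real.logb 2 (1 / (1 + c)) = -Real.logb 2 (1 + c) := by
    rw [one_div, Real.logb_inv]
  have hkey : (1 - p) * Real.logb 2 c + binEntropy p = 0 := key_id p hp0 hp1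
  have hrpow : Real.rpow p (p / (1 - p)) = s := rfl
  -- upper bound
  have hub : ∀ x ∈ Set.Icc (0:ℝ) 1,
      binEntropy (x * (1 - p)) - x * binEntropy p ≤ Real.logb 2 (1 + c) := by
    rintro x ⟨hx0, hx1⟩
    have ha0 : 0 ≤ x * (1 - p) := by positivity
    have ha1 : x * (1 - p) ≤ 1 := by nlinarith
    have hg := gibbs (x * (1 - p)) (c / (1 + c)) ha0 ha1 hb0 hb1
    calc binEntropy (x * (1 - p)) - x * binEntropy p
        ≤ -(x * (1 - p)) * Real.logb 2 (c / (1 + c))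
            - (1 - x * (1 - p)) * Real.logb 2 (1 - c / (1 + c)) - x * binEntropy p := by
          linarith
      _ = Real.logb 2 (1 + c) - x * ((1 - p) * Real.logb 2 c + binEntropy p) := by
          rw [h1m, hAB, hB']; ring
      _ = Real.logb 2 (1 + c) := by rw [hkey]; ring
  -- the maximizer
  have hx_mem : s / (1 + c) ∈ Set.Icc (0:ℝ) 1 := by
    constructor
    · positivity
    · rw [div_le_one h1c]; linarith
  have hx_eq : s / (1 + c) * (1 - p) = c / (1 + c) := by
    rw [hc_def]; ring
  have hval : binEntropy (s / (1 + c) * (1 - p)) - s / (1 + c) * binEntropy p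
      = Real.logb 2 (1 + c) := by
    have hE : binEntropy p = -((1 - p) * Real.logb 2 c) := by linarith
    have hbe : binEntropy (c / (1 + c))
        = Real.logb 2 (1 + c) - c / (1 + c) * Real.logb 2 c := by
      unfold binEntropy
      rw [h1m, hAB, hB']
      field_simp
      ring
    rw [hx_eq, hbe, hE, hc_def]
    field_simp
    ring
  refine IsGreatest.csSup_eq ⟨⟨s / (1 + c), hx_mem, hval.symm⟩, ?_⟩
  rintro y ⟨x, hx, rfl⟩
  exact hub x hx
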